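/- Fix a real number η > 0. There exists C such that for all integers m ≥ 3 and q ≥ 1 with m + q ≥ C, the number of distinct values of D_w, as w ranges over {2,3,…,q+1}^m, is at least q^m / (q+1)^{2ηm}. -/

import Mathlib

/-- The continuant `K_i(x₁,…,x_i)`: `K₀ = 1`, `K₁ = x₁`, and
`K_i = x_i · K_{i-1} − K_{i-2}` for `i ≥ 2`. -/
def contK (x : ℕ → ℤ) : ℕ → ℤ
  | 0 => 1
  | 1 => x 1
  | (n + 2) => x (n + 2) * contK x (n + 1) - contK x n

/-- Extension of a word `w = (w₁,…,w_m)` (indexed by `Fin m`) to a sequence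
indexed from `1`: position `j ∈ {1,…,m}` has value `w_j`. -/
def wext (m : ℕ) (w : Fin m → ℕ) : ℕ → ℤ :=
  fun j => if h : j - 1 < m then (w ⟨j - 1, h⟩ : ℤ) else 2

/-- `D_w = K_m(w₁,…,w_m) · K_{m−1}(w₁,…,w_{m−1})`. -/
def Dword (m : ℕ) (w : Fin m → ℕ) : ℤ :=
  contK (wext m w) m * contK (wext m w) (m - 1)

/-! The map `w ↦ (K_m, K_{m-1})` is injective on words with letters `≥ 2`: since
`0 < K_{i-1} < K_i`, the recursion `K_{i+1} = w_{i+1} K_i - K_{i-1}` is a division with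
remainder and can be run backwards. Hence a value `d = D_w` is attained by at most `τ(d)` words,
one for each divisor `K_m` of `d`. As `d ≤ (q+1)^{2m}`, the divisor bound `τ(d) ≪ d^{η/2}`
bounds every fibre by `C (q+1)^{ηm}`, and `C ≤ (q+1)^{ηm}` once `m + q` is large. -/

open Finset

section Continuant

variable {x y : ℕ → ℤ}

lemma one_le_contK_and_contK_lt_succ (hx : ∀ j, 2 ≤ x j) :
    ∀ i, 1 ≤ contK x i ∧ contK x i < contK x (i + 1)
  | 0 => ⟨le_rfl, by simp only [contK]; linarith [hx 1]⟩
  | i + 1 => by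
    obtain ⟨hpos, hlt⟩ := one_le_contK_and_contK_lt_succ hx i
    refine ⟨by linarith, ?_⟩
    show contK x (i + 1) < x (i + 2) * contK x (i + 1) - contK x i
    nlinarith [hx (i + 2)]

lemma one_le_contK (hx : ∀ j, 2 ≤ x j) (i : ℕ) : 1 ≤ contK x i :=
  (one_le_contK_and_contK_lt_succ hx i).1

lemma contK_lt_contK_succ (hx : ∀ j, 2 ≤ x j) (i : ℕ) : contK x i < contK x (i + 1) :=
  (one_le_contK_and_contK_lt_succ hx i).2

lemma contK_succ_le_mul (hx : ∀ j, 2 ≤ x j) {b : ℤ} (hb : ∀ j, x j ≤ b) :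
    ∀ i, contK x (i + 1) ≤ b * contK x i
  | 0 => by simpa [contK] using hb 1
  | i + 1 => by
    show x (i + 2) * contK x (i + 1) - contK x i ≤ b * contK x (i + 1)
    nlinarith [hb (i + 2), one_le_contK hx i, one_le_contK hx (i + 1)]

lemma contK_le_pow (hx : ∀ j, 2 ≤ x j) {b : ℤ} (hb : ∀ j, x j ≤ b) :
    ∀ i, contK x i ≤ b ^ i
  | 0 => by simp [contK]
  | i + 1 =>
    calc contK x (i + 1) ≤ b * contK x i := contK_succ_le_mul hx hb i
      _ ≤ b * b ^ i :=
        mul_le_mul_of_nonneg_left (contK_le_pow hx hb i) (by linarith [hx 0, hb 0])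
      _ = b ^ (i + 1) := by ring

lemma eq_and_eq_of_mul_sub_eq_mul_sub {k a b r s : ℤ} (hr : 0 ≤ r) (hrk : r < k)
    (hs : 0 ≤ s) (hsk : s < k) (h : a * k - r = b * k - s) : a = b ∧ r = s := by
  have hab : a = b := by
    rcases lt_trichotomy a b with hlt | heq | hgt
    · nlinarith
    · exact heq
    · nlinarith
  exact ⟨hab, by subst hab; linarith⟩

lemma eqOn_of_contK_eq (hx : ∀ j, 2 ≤ x j) (hy : ∀ j, 2 ≤ y j) :
    ∀ n, contK x n = contK y n → contK x (n + 1) = contK y (n + 1) →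
      Set.EqOn x y (Set.Icc 1 (n + 1))
  | 0, _, h₁, j, hj => by
    obtain rfl : j = 1 := by simp only [Set.mem_Icc] at hj; omega
    simpa [contK] using h₁
  | n + 1, h₀, h₁, j, hj => by
    have hrec : x (n + 2) * contK x (n + 1) - contK x n =
        y (n + 2) * contK x (n + 1) - contK y n := by
      simpa only [contK, ← h₀] using h₁
    obtain ⟨hlast, hprev⟩ := eq_and_eq_of_mul_sub_eq_mul_sub
      (by linarith [one_le_contK hx n]) (contK_lt_contK_succ hx n)
      (by linarith [one_le_contK hy n]) (h₀ ▸ contK_lt_contK_succ hy n) hrec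
    simp only [Set.mem_Icc] at hj
    rcases Nat.lt_or_ge j (n + 2) with hj' | hj'
    · exact eqOn_of_contK_eq hx hy n hprev h₀ ⟨hj.1, by omega⟩
    · obtain rfl : j = n + 2 := by omega
      exact hlast

end Continuant

section Word

variable {m : ℕ} {w v : Fin m → ℕ}

lemma two_le_wext (hw : ∀ i, 2 ≤ w i) (j : ℕ) : 2 ≤ wext m w j := by
  unfold wext
  split
  · exact_mod_cast hw _
  · exact le_rfl

lemma wext_le {b : ℕ} (hb : 2 ≤ b) (hw : ∀ i, w i ≤ b) (j : ℕ) : wext m w j ≤ b := by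
  unfold wext
  split
  · exact_mod_cast hw _
  · exact_mod_cast hb

lemma wext_succ (i : Fin m) : wext m w (i + 1) = w i := by
  simp [wext]

lemma eq_of_contK_wext_eq (hm : m ≠ 0) (hw : ∀ i, 2 ≤ w i) (hv : ∀ i, 2 ≤ v i)
    (h₁ : contK (wext m w) m = contK (wext m v) m)
    (h₀ : contK (wext m w) (m - 1) = contK (wext m v) (m - 1)) : w = v := by
  obtain ⟨n, rfl⟩ := Nat.exists_eq_succ_of_ne_zero hm
  have hEq := eqOn_of_contK_eq (two_le_wext hw) (two_le_wext hv) n h₀ h₁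
  funext i
  have hi := hEq (show (i : ℕ) + 1 ∈ Set.Icc 1 (n + 1) by simp only [Set.mem_Icc]; omega)
  rw [wext_succ, wext_succ] at hi
  exact_mod_cast hi

lemma one_le_Dword (hw : ∀ i, 2 ≤ w i) : 1 ≤ Dword m w :=
  one_le_mul_of_one_le_of_one_le (one_le_contK (two_le_wext hw) m)
    (one_le_contK (two_le_wext hw) (m - 1))

lemma Dword_le_pow {b : ℕ} (hb : 2 ≤ b) (hw : ∀ i, 2 ≤ w i) (hwb : ∀ i, w i ≤ b) :
    Dword m w ≤ (b : ℤ) ^ (2 * m) := by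
  have hx := two_le_wext hw
  have hxb := wext_le hb hwb
  calc Dword m w ≤ (b : ℤ) ^ m * (b : ℤ) ^ m := by
        unfold Dword
        gcongr
        · linarith [one_le_contK hx (m - 1)]
        · exact contK_le_pow hx hxb m
        · exact (contK_le_pow hx hxb _).trans (pow_le_pow_right₀ (by omega) (by omega))
    _ = (b : ℤ) ^ (2 * m) := by ring

end Word

lemma exists_add_one_le_mul_pow {t : ℝ} (ht : 1 < t) :
    ∃ A : ℝ, 1 ≤ A ∧ ∀ a : ℕ, (a : ℝ) + 1 ≤ A * t ^ a := by
  set A := max 1 (t - 1)⁻¹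
  have hA : 1 ≤ A * (t - 1) := by
    calc (1 : ℝ) = (t - 1)⁻¹ * (t - 1) := (inv_mul_cancel₀ (by linarith)).symm
      _ ≤ A * (t - 1) := mul_le_mul_of_nonneg_right (le_max_right _ _) (by linarith)
  refine ⟨A, le_max_left _ _, fun a => ?_⟩
  have hbern : 1 + a * (t - 1) ≤ t ^ a := by
    simpa using one_add_mul_le_pow (by linarith : (-2 : ℝ) ≤ t - 1) a
  calc (a : ℝ) + 1 ≤ A * (1 + a * (t - 1)) := by
        nlinarith [le_max_left 1 (t - 1)⁻¹, (a.cast_nonneg : (0 : ℝ) ≤ a)]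
    _ ≤ A * t ^ a := by gcongr

lemma prod_ite_lt_le_pow {A : ℝ} (hA : 1 ≤ A) (P : ℕ) (s : Finset ℕ) :
    ∏ p ∈ s, (if p < P then A else 1) ≤ A ^ P :=
  calc ∏ p ∈ s, (if p < P then A else 1) = ∏ p ∈ s with p < P, A := by
        simp only [prod_ite, prod_const_one, mul_one]
    _ ≤ ∏ p ∈ range P, A :=
        prod_le_prod_of_subset_of_one_le (fun p hp => by simp_all)
          (fun _ _ => by linarith) (fun _ _ _ => hA)
    _ = A ^ P := by rw [prod_const, card_range]

/-- The divisor bound `τ(n) = O(n^ε)`: in `τ(n) / n^ε = ∏ (a + 1) / (p^a)^ε` only the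
primes with `p^ε < 2` contribute a factor exceeding `1`, and each such factor is bounded. -/
theorem exists_card_divisors_le_mul_rpow {ε : ℝ} (hε : 0 < ε) :
    ∃ C : ℝ, 0 ≤ C ∧ ∀ n : ℕ, n ≠ 0 → (#n.divisors : ℝ) ≤ C * (n : ℝ) ^ ε := by
  obtain ⟨A, hA1, hA⟩ := exists_add_one_le_mul_pow (Real.one_lt_rpow one_lt_two hε)
  set P := ⌈(2 : ℝ) ^ ε⁻¹⌉₊
  set c : ℕ → ℝ := fun p => if p < P then A else 1
  have hlocal : ∀ p a : ℕ, p.Prime → (a : ℝ) + 1 ≤ c p * ((p : ℝ) ^ a) ^ ε := by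
    intro p a hp
    have hp2 : (2 : ℝ) ≤ p := by exact_mod_cast hp.two_le
    rw [← Real.rpow_pow_comm (by positivity)]
    by_cases hpP : p < P
    · simp only [c, if_pos hpP]
      calc (a : ℝ) + 1 ≤ A * ((2 : ℝ) ^ ε) ^ a := hA a
        _ ≤ A * ((p : ℝ) ^ ε) ^ a := by gcongr
    · simp only [c, if_neg hpP, one_mul]
      have h2 : (2 : ℝ) ≤ (p : ℝ) ^ ε := by
        have hPp : (2 : ℝ) ^ ε⁻¹ ≤ p :=
          (Nat.le_ceil _).trans (by exact_mod_cast Nat.le_of_not_lt hpP)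
        exact (Real.rpow_inv_le_iff_of_pos (by norm_num) (by positivity) hε).1 hPp
      calc (a : ℝ) + 1 ≤ 2 ^ a := by exact_mod_cast Nat.lt_two_pow_self
        _ ≤ ((p : ℝ) ^ ε) ^ a := by gcongr
  refine ⟨A ^ P, by positivity, fun n hn => ?_⟩
  have hn_eq : ((∏ p ∈ n.primeFactors, p ^ n.factorization p : ℕ) : ℝ) = n := by
    rw [← Nat.support_factorization]
    exact congrArg _ (Nat.prod_factorization_pow_eq_self hn)
  calc (#n.divisors : ℝ) = ∏ p ∈ n.primeFactors, ((n.factorization p : ℝ) + 1) := by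
        rw [Nat.card_divisors hn]; push_cast; rfl
    _ ≤ ∏ p ∈ n.primeFactors, c p * ((p : ℝ) ^ n.factorization p) ^ ε :=
        prod_le_prod (fun _ _ => by positivity)
          (fun p hp => hlocal p _ (Nat.prime_of_mem_primeFactors hp))
    _ = (∏ p ∈ n.primeFactors, c p) * (n : ℝ) ^ ε := by
        rw [prod_mul_distrib, Real.finsetProd_rpow _ _ (fun _ _ => by positivity), ← hn_eq]
        push_cast; rfl
    _ ≤ A ^ P * (n : ℝ) ^ ε := by gcongr; exact prod_ite_lt_le_pow hA1 P _

def words (m q : ℕ) : Finset (Fin m → ℕ) :=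
  Fintype.piFinset fun _ => Icc 2 (q + 1)

lemma mem_words {m q : ℕ} {w : Fin m → ℕ} :
    w ∈ words m q ↔ ∀ i, 2 ≤ w i ∧ w i ≤ q + 1 := by
  simp [words]

lemma card_words (m q : ℕ) : #(words m q) = q ^ m := by
  simp [words]

lemma card_filter_Dword_eq_le {m q : ℕ} (hm : m ≠ 0) (d : ℤ) :
    #{w ∈ words m q | Dword m w = d} ≤ #d.natAbs.divisors := by
  refine card_le_card_of_injOn (fun w => (contK (wext m w) m).natAbs) ?_ ?_
  · intro w hw
    simp only [mem_coe, mem_filter, mem_words] at hw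
    obtain ⟨hw, rfl⟩ := hw
    have hD := one_le_Dword fun i => (hw i).1
    simp only [mem_coe, Nat.mem_divisors, Int.natAbs_dvd_natAbs, ne_eq, Int.natAbs_eq_zero]
    exact ⟨dvd_mul_right _ _, by omega⟩
  · intro w hw v hv hwv
    simp only [mem_coe, mem_filter, mem_words] at hw hv
    obtain ⟨hw, hwd⟩ := hw
    obtain ⟨hv, hvd⟩ := hv
    have hw2 := two_le_wext fun i => (hw i).1
    have hv2 := two_le_wext fun i => (hv i).1
    have h₁ : contK (wext m w) m = contK (wext m v) m :=
      (Int.natAbs_inj_of_nonneg_of_nonneg (by linarith [one_le_contK hw2 m])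
        (by linarith [one_le_contK hv2 m])).1 hwv
    have h₀ : contK (wext m w) (m - 1) = contK (wext m v) (m - 1) := by
      have hD : Dword m w = Dword m v := hwd.trans hvd.symm
      unfold Dword at hD
      rw [h₁] at hD
      exact mul_left_cancel₀ (by linarith [one_le_contK hv2 m]) hD
    exact eq_of_contK_wext_eq hm (fun i => (hw i).1) (fun i => (hv i).1) h₁ h₀

lemma card_filter_Dword_eq_le_mul_rpow {C ε : ℝ} (hC : 0 ≤ C) (hε : 0 ≤ ε)
    (hdiv : ∀ n : ℕ, n ≠ 0 → (#n.divisors : ℝ) ≤ C * (n : ℝ) ^ ε)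
    {m q : ℕ} (hm : m ≠ 0) (hq : 1 ≤ q) (d : ℤ) :
    (#{w ∈ words m q | Dword m w = d} : ℝ) ≤ C * (((q : ℝ) + 1) ^ (2 * m)) ^ ε := by
  rcases (filter (fun w => Dword m w = d) (words m q)).eq_empty_or_nonempty with hempty | ⟨w, hw⟩
  · rw [hempty, card_empty, Nat.cast_zero]
    positivity
  simp only [mem_filter, mem_words] at hw
  obtain ⟨hw, rfl⟩ := hw
  have hD1 := one_le_Dword fun i => (hw i).1
  have hDle := Dword_le_pow (by omega : 2 ≤ q + 1) (fun i => (hw i).1) (fun i => (hw i).2)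
  have hcast : ((Dword m w).natAbs : ℝ) ≤ ((q : ℝ) + 1) ^ (2 * m) := by
    rw [Nat.cast_natAbs, abs_of_nonneg (by linarith)]
    exact_mod_cast hDle
  calc (#{w' ∈ words m q | Dword m w' = Dword m w} : ℝ)
      ≤ #(Dword m w).natAbs.divisors := by exact_mod_cast card_filter_Dword_eq_le hm _
    _ ≤ C * ((Dword m w).natAbs : ℝ) ^ ε := hdiv _ (by omega)
    _ ≤ C * (((q : ℝ) + 1) ^ (2 * m)) ^ ε := by gcongr

lemma card_le_mul_card_image_of_card_fiber_le {α β : Type*} [DecidableEq β] {f : α → β}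
    (s : Finset α) {B : ℝ} (hB : ∀ b, (#{a ∈ s | f a = b} : ℝ) ≤ B) :
    (#s : ℝ) ≤ B * #(s.image f) := by
  rw [card_eq_sum_card_image f s, mul_comm]
  push_cast
  simpa using sum_le_sum fun b (_ : b ∈ s.image f) => hB b

lemma add_le_add_one_pow {m : ℕ} {q : ℝ} (hm : 1 ≤ m) (hq : 1 ≤ q) :
    (m : ℝ) + q ≤ (q + 1) ^ m := by
  have hbern := one_add_mul_le_pow (by linarith : (-2 : ℝ) ≤ q) m
  have hm' : (1 : ℝ) ≤ m := by exact_mod_cast hm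
  rw [add_comm 1 q] at hbern
  nlinarith

theorem many_distinct_divisors (η : ℝ) (hη : 0 < η) :
    ∃ C : ℕ, ∀ m q : ℕ, 3 ≤ m → 1 ≤ q → C ≤ m + q →
      (q : ℝ) ^ m / ((q : ℝ) + 1) ^ (2 * η * (m : ℝ)) ≤
        (Set.ncard {d : ℤ | ∃ w : Fin m → ℕ,
          (∀ i, 2 ≤ w i ∧ w i ≤ q + 1) ∧ Dword m w = d} : ℝ) := by
  obtain ⟨C, hC0, hC⟩ := exists_card_divisors_le_mul_rpow (half_pos hη)
  refine ⟨⌈C ^ η⁻¹⌉₊, fun m q hm hq hmq => ?_⟩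
  set B : ℝ := (((q : ℝ) + 1) ^ m) ^ η with hB
  have hset : {d : ℤ | ∃ w : Fin m → ℕ, (∀ i, 2 ≤ w i ∧ w i ≤ q + 1) ∧ Dword m w = d} =
      ↑((words m q).image (Dword m)) := by
    ext d; simp [mem_words]
  have hCB : C ≤ B := by
    refine (Real.rpow_inv_le_iff_of_pos hC0 (by positivity) hη).1 ?_
    calc C ^ η⁻¹ ≤ ⌈C ^ η⁻¹⌉₊ := Nat.le_ceil _
      _ ≤ (m : ℝ) + q := by exact_mod_cast hmq
      _ ≤ ((q : ℝ) + 1) ^ m := add_le_add_one_pow (by omega) (by exact_mod_cast hq)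
  have hfiber (d : ℤ) : (#{w ∈ words m q | Dword m w = d} : ℝ) ≤ C * B := by
    convert card_filter_Dword_eq_le_mul_rpow hC0 (half_pos hη).le hC (by omega : m ≠ 0) hq d
      using 2
    rw [hB, ← Real.rpow_natCast_mul (by positivity), ← Real.rpow_natCast_mul (by positivity)]
    push_cast; ring_nf
  have hcount := card_le_mul_card_image_of_card_fiber_le (words m q) hfiber
  rw [card_words, Nat.cast_pow] at hcount
  have hdenom : ((q : ℝ) + 1) ^ (2 * η * (m : ℝ)) = B * B := by
    rw [hB, ← Real.rpow_natCast_mul (by positivity), ← Real.rpow_add (by positivity)]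
    ring_nf
  rw [hset, Set.ncard_coe_finset, hdenom, div_le_iff₀ (by positivity)]
  calc (q : ℝ) ^ m ≤ C * B * #((words m q).image (Dword m)) := hcount
    _ ≤ B * B * #((words m q).image (Dword m)) := by gcongr
    _ = #((words m q).image (Dword m)) * (B * B) := by ring
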